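/- Let m₁, …, mₙ be completely additive measures on an effect algebra E satisfying (RDP). Then m = m₁ ∨ ⋯ ∨ mₙ, the supremum taken in the lattice-ordered group J(E), is also a completely additive measure on E. -/

import Mathlib

universe u v

/-- A pseudo effect algebra: a partial algebra `(E; +, 0, 1)` with a partially defined
binary operation (modelled as `E → E → Option E`) satisfying (i)-(iv). -/
structure PseudoEffectAlgebra (E : Type u) where
  add : E → E → Option E
  zero : E
  one : E
  /-- (i) `a+b` and `(a+b)+c` exist iff `b+c` and `a+(b+c)` exist, and then they are equal. -/
  assoc : ∀ a b c x : E,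
    (∃ ab, add a b = some ab ∧ add ab c = some x) ↔
    (∃ bc, add b c = some bc ∧ add a bc = some x)
  /-- (ii) there is exactly one `d` with `a + d = 1`. -/
  rinv : ∀ a : E, ∃! d, add a d = some one
  /-- (ii) there is exactly one `e` with `e + a = 1`. -/
  linv : ∀ a : E, ∃! e, add e a = some one
  /-- (iii) if `a+b` exists there are `d, e` with `a+b = d+a = b+e`. -/
  com_ex : ∀ a b ab : E, add a b = some ab →
    (∃ d, add d a = some ab) ∧ (∃ e, add b e = some ab)
  /-- (iv) if `1 + a` exists then `a = 0`. -/
  one_add : ∀ a x : E, add one a = some x → a = zero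
  /-- (iv) if `a + 1` exists then `a = 0`. -/
  add_one : ∀ a x : E, add a one = some x → a = zero

namespace PseudoEffectAlgebra

variable {E : Type u}

/-- `a ≤ b` iff `a + c = b` for some `c`. -/
def le (P : PseudoEffectAlgebra E) (a b : E) : Prop := ∃ c, P.add a c = some b

/-- The Riesz Decomposition Property (RDP). -/
def RDP (P : PseudoEffectAlgebra E) : Prop :=
  ∀ a₁ a₂ b₁ b₂ x : E, P.add a₁ a₂ = some x → P.add b₁ b₂ = some x →
    ∃ d₁ d₂ d₃ d₄, P.add d₁ d₂ = some a₁ ∧ P.add d₃ d₄ = some a₂ ∧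
      P.add d₁ d₃ = some b₁ ∧ P.add d₂ d₄ = some b₂

/-- A pseudo effect algebra with commutative `+` is an effect algebra. -/
def Commutative (P : PseudoEffectAlgebra E) : Prop := ∀ a b : E, P.add a b = P.add b a

/-- A signed measure: additive on existing sums. -/
def IsSignedMeasure (P : PseudoEffectAlgebra E) (m : E → ℝ) : Prop :=
  ∀ a b ab : E, P.add a b = some ab → m ab = m a + m b

/-- A measure: a nonnegative signed measure. -/
def IsMeasure (P : PseudoEffectAlgebra E) (m : E → ℝ) : Prop :=
  IsSignedMeasure P m ∧ ∀ a : E, 0 ≤ m a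

/-- A state: a normalized measure. -/
def IsState (P : PseudoEffectAlgebra E) (s : E → ℝ) : Prop :=
  IsMeasure P s ∧ s P.one = 1

/-- A Jordan signed measure: a difference of two measures. -/
def IsJordan (P : PseudoEffectAlgebra E) (m : E → ℝ) : Prop :=
  ∃ m₁ m₂ : E → ℝ, IsMeasure P m₁ ∧ IsMeasure P m₂ ∧ m = m₁ - m₂

/-- `J(E)`, the set of Jordan signed measures. -/
def Jordan (P : PseudoEffectAlgebra E) : Set (E → ℝ) := {m | IsJordan P m}

/-- `M⁺(E)`, the set of measures. -/
def Measures (P : PseudoEffectAlgebra E) : Set (E → ℝ) := {m | IsMeasure P m}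

/-- `S(E)`, the set of states. -/
def States (P : PseudoEffectAlgebra E) : Set (E → ℝ) := {s | IsState P s}

/-- `sup` is the least upper bound of `S` computed within the subset `J`
(with the pointwise order `≤⁺` on functions). -/
def IsLubIn (J S : Set (E → ℝ)) (sup : E → ℝ) : Prop :=
  sup ∈ J ∧ (∀ m ∈ S, m ≤ sup) ∧ ∀ b ∈ J, (∀ m ∈ S, m ≤ b) → sup ≤ b

/-- `inf` is the greatest lower bound of `S` computed within the subset `J`. -/
def IsGlbIn (J S : Set (E → ℝ)) (inf : E → ℝ) : Prop :=
  inf ∈ J ∧ (∀ m ∈ S, inf ≤ m) ∧ ∀ b ∈ J, (∀ m ∈ S, b ≤ m) → b ≤ inf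

/-- `SumList P [x₁, …, xₙ] x` means the sum `x₁ + ⋯ + xₙ` is defined in `E` and equals `x`. -/
inductive SumList (P : PseudoEffectAlgebra E) : List E → E → Prop
  | single (a : E) : SumList P [a] a
  | cons {l : List E} {b : E} (a ab : E) :
      SumList P l b → P.add a b = some ab → SumList P (a :: l) ab

/-- A face of a convex set `K`: a convex extreme subset. -/
def IsFace (K F : Set (E → ℝ)) : Prop := Convex ℝ F ∧ IsExtreme ℝ K F

/-- The complementary face `F'` of `F` in `K`: the union of all faces of `K` disjoint from `F`. -/
def ComplFace (K F : Set (E → ℝ)) : Set (E → ℝ) :=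
  ⋃₀ {G | IsFace K G ∧ Disjoint G F}

/-- The cone `V(F) = {α s : α ≥ 0, s ∈ F}` generated by a subset `F` of the state space. -/
def VCone (F : Set (E → ℝ)) : Set (E → ℝ) :=
  {m | ∃ α : ℝ, 0 ≤ α ∧ ∃ s ∈ F, m = α • s}

/-- `V(F)` is `∨`-closed: for every chain in `V(F)` bounded above in `M⁺(E)`,
the supremum taken in `J(E)` belongs to `V(F)`. -/
def VeeClosed (P : PseudoEffectAlgebra E) (F : Set (E → ℝ)) : Prop :=
  ∀ C : Set (E → ℝ), C ⊆ VCone F → C.Nonempty → IsChain (· ≤ ·) C →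
    (∃ b ∈ Measures P, ∀ m ∈ C, m ≤ b) →
    ∀ msup : E → ℝ, IsLubIn (Jordan P) C msup → msup ∈ VCone F

/-- `a` is the supremum of `S ⊆ E` in the partial order of `E`. -/
def IsLUBe (P : PseudoEffectAlgebra E) (S : Set E) (a : E) : Prop :=
  (∀ x ∈ S, P.le x a) ∧ ∀ b : E, (∀ x ∈ S, P.le x b) → P.le a b

/-- A σ-additive (signed) measure. -/
def SigmaAdditive (P : PseudoEffectAlgebra E) (m : E → ℝ) : Prop :=
  ∀ (a_ : ℕ → E) (a : E), (∀ n : ℕ, P.le (a_ n) (a_ (n + 1))) →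
    IsLUBe P (Set.range a_) a →
    Filter.Tendsto (fun n => m (a_ n)) Filter.atTop (nhds (m a))

/-- An upwards continuous (signed) measure: `{a_t} ↑ a` implies `{m(a_t)} ↑ m(a)`. -/
def UpwardsContinuous (P : PseudoEffectAlgebra E) (m : E → ℝ) : Prop :=
  ∀ {T : Type v} [Nonempty T] (a_ : T → E) (a : E),
    (∀ s t : T, ∃ r : T, P.le (a_ s) (a_ r) ∧ P.le (a_ t) (a_ r)) →
    IsLUBe P (Set.range a_) a →
    IsLUB (Set.range fun t => m (a_ t)) (m a)

/-- The system `{a_t}_{t ∈ T}` is summable with sum `a`: every finite subsystem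
(coded by a duplicate-free list) has a sum in `E`, and `a` is the supremum of
all such finite partial sums. -/
def IsSummableSum (P : PseudoEffectAlgebra E) {T : Type v} (a_ : T → E) (a : E) : Prop :=
  (∀ l : List T, l ≠ [] → l.Nodup → ∃ x : E, SumList P (l.map a_) x) ∧
  IsLUBe P {x : E | ∃ l : List T, l.Nodup ∧ SumList P (l.map a_) x} a

/-- A completely additive (signed) measure: whenever `a = Σ_{t∈T} a_t`, the value `m a`
is the supremum of the finite partial sums `Σ_{t∈F} m (a_t)`. -/
def CompletelyAdditive (P : PseudoEffectAlgebra E) (m : E → ℝ) : Prop :=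
  ∀ {T : Type v} (a_ : T → E) (a : E), IsSummableSum P a_ a →
    IsLUB {r : ℝ | ∃ l : List T, l.Nodup ∧ r = (l.map (fun t => m (a_ t))).sum} (m a)

/-- An ideal of a pseudo effect algebra. -/
def IsIdeal (P : PseudoEffectAlgebra E) (I : Set E) : Prop :=
  P.zero ∈ I ∧
  (∀ a ∈ I, ∀ b ∈ I, ∀ ab : E, P.add a b = some ab → ab ∈ I) ∧
  (∀ a b : E, b ∈ I → P.le a b → a ∈ I)

/-- A normal ideal: `a + I = I + a` for all `a`. -/
def IsNormalIdeal (P : PseudoEffectAlgebra E) (I : Set E) : Prop :=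
  IsIdeal P I ∧
  ∀ a : E, {x : E | ∃ b ∈ I, P.add a b = some x} = {x : E | ∃ b ∈ I, P.add b a = some x}

/-- `m₁ ≪_ε m₂`: `m₁` is `m₂`-continuous. -/
def EpsCont (m₁ m₂ : E → ℝ) : Prop :=
  ∀ ε : ℝ, 0 < ε → ∃ δ : ℝ, 0 < δ ∧ ∀ a : E, m₂ a < δ → m₁ a < ε

/-- `m₁ ≪ m₂`: `m₁` is absolutely continuous with respect to `m₂`. -/
def AbsCont (m₁ m₂ : E → ℝ) : Prop := ∀ a : E, m₂ a = 0 → m₁ a = 0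

/-- `a⁻ = 1 ⧵ a`, the unique element with `a⁻ + a = 1`. -/
noncomputable def lneg (P : PseudoEffectAlgebra E) (a : E) : E := (P.linv a).exists.choose

/-- `a` is central (Boolean): `a ∧ a⁻ = 0`. -/
def IsCentral (P : PseudoEffectAlgebra E) (a : E) : Prop :=
  ∀ x : E, P.le x a → P.le x (lneg P a) → x = P.zero

/-- `E` is monotone σ-complete. -/
def MonotoneSigmaComplete (P : PseudoEffectAlgebra E) : Prop :=
  ∀ a_ : ℕ → E, (∀ n : ℕ, P.le (a_ n) (a_ (n + 1))) → ∃ a : E, IsLUBe P (Set.range a_) a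

/-- `m ⊥ t`: there is `a ∈ E` with `t a = 0` and `m a⁻ = 0`. -/
def Perp (P : PseudoEffectAlgebra E) (m t : E → ℝ) : Prop :=
  ∃ a : E, t a = 0 ∧ m (lneg P a) = 0

/-- Unique decomposition of every measure `m` as `m = m₁ + m₂` with `m₁` a measure
satisfying `Q` and `m₂` a measure singular with respect to the measures satisfying `Q`. -/
def MeasDecomp (P : PseudoEffectAlgebra E) (Q : (E → ℝ) → Prop) : Prop :=
  ∀ m ∈ Measures P, ∃ m₁ m₂ : E → ℝ,
    (IsMeasure P m₁ ∧ Q m₁) ∧ IsMeasure P m₂ ∧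
    (∀ t : E → ℝ, IsMeasure P t → Q t → t ≤ m₂ → t = 0) ∧
    m = m₁ + m₂ ∧
    (∀ m₁' m₂' : E → ℝ, (IsMeasure P m₁' ∧ Q m₁') → IsMeasure P m₂' →
      (∀ t : E → ℝ, IsMeasure P t → Q t → t ≤ m₂' → t = 0) →
      m = m₁' + m₂' → m₁' = m₁ ∧ m₂' = m₂)

/-- Unique convex decomposition of every state `s` as `s = λ₁ s₁ + λ₂ s₂` with `s₁` a state
satisfying `Q` and `s₂` a state such that `α s' ≤⁺ s₂` with `s'` a state satisfying `Q`
and `α ≥ 0` forces `α = 0`. -/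
def StateDecomp (P : PseudoEffectAlgebra E) (Q : (E → ℝ) → Prop) : Prop :=
  ∀ s ∈ States P, ∃ l₁ l₂ : ℝ, 0 ≤ l₁ ∧ 0 ≤ l₂ ∧ l₁ + l₂ = 1 ∧
    ∃ s₁ s₂ : E → ℝ,
      (IsState P s₁ ∧ Q s₁) ∧ IsState P s₂ ∧
      (∀ (s' : E → ℝ) (α : ℝ), IsState P s' → Q s' → 0 ≤ α → α • s' ≤ s₂ → α = 0) ∧
      s = l₁ • s₁ + l₂ • s₂ ∧
      (∀ (μ₁ μ₂ : ℝ) (s₁' s₂' : E → ℝ), 0 ≤ μ₁ → 0 ≤ μ₂ → μ₁ + μ₂ = 1 →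
        (IsState P s₁' ∧ Q s₁') → IsState P s₂' →
        (∀ (s' : E → ℝ) (α : ℝ), IsState P s' → Q s' → 0 ≤ α → α • s' ≤ s₂' → α = 0) →
        s = μ₁ • s₁' + μ₂ • s₂' →
        μ₁ = l₁ ∧ μ₂ = l₂ ∧ (l₁ ≠ 0 → s₁' = s₁) ∧ (l₂ ≠ 0 → s₂' = s₂))

end PseudoEffectAlgebra

open PseudoEffectAlgebra

/-!
The supremum `m` lies between `m₁ ≥ 0` and `μ = m₁ + ⋯ + mₙ`, an upper bound of the `mᵢ` in `J(E)`
that is completely additive (finite partial sums approximating each `mᵢ a` combine). So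
`μ = m + (μ - m)` with both summands measures, and then for every finite partial sum `a_F ≤ a`,
`m a - m a_F ≤ μ a - μ a_F`, because `(μ - m) a_F ≤ (μ - m) a`.
-/

namespace PseudoEffectAlgebra

variable {E : Type u} {P : PseudoEffectAlgebra E}

theorem IsSignedMeasure.map_sumList {m : E → ℝ} (hm : IsSignedMeasure P m) {L : List E} {x : E}
    (h : SumList P L x) : m x = (L.map m).sum := by
  induction h with
  | single a => simp
  | cons a ab _ hab ih => simp [hm _ _ _ hab, ih]

theorem IsSignedMeasure.sub {m k : E → ℝ} (hm : IsSignedMeasure P m) (hk : IsSignedMeasure P k) :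
    IsSignedMeasure P (m - k) := fun a b ab hab => by
  simp only [Pi.sub_apply, hm a b ab hab, hk a b ab hab]
  ring

theorem IsJordan.isSignedMeasure {m : E → ℝ} (h : IsJordan P m) : IsSignedMeasure P m := by
  obtain ⟨p, q, hp, hq, rfl⟩ := h
  exact hp.1.sub hq.1

theorem isMeasure_zero : IsMeasure P 0 :=
  ⟨fun _ _ _ _ => by simp, fun _ => le_rfl⟩

theorem IsMeasure.add {m k : E → ℝ} (hm : IsMeasure P m) (hk : IsMeasure P k) :
    IsMeasure P (m + k) := by
  refine ⟨fun a b ab hab => ?_, fun a => add_nonneg (hm.2 a) (hk.2 a)⟩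
  simp only [Pi.add_apply, hm.1 a b ab hab, hk.1 a b ab hab]
  ring

theorem IsMeasure.sum {ι : Type*} {s : Finset ι} {m : ι → E → ℝ}
    (hm : ∀ i ∈ s, IsMeasure P (m i)) : IsMeasure P (∑ i ∈ s, m i) := by
  classical
  induction s using Finset.induction_on with
  | empty => simpa using isMeasure_zero
  | insert i s hi ih =>
    rw [Finset.sum_insert hi]
    exact (hm i (s.mem_insert_self i)).add (ih fun j hj => hm j (Finset.mem_insert_of_mem hj))

theorem IsMeasure.mem_jordan {m : E → ℝ} (hm : IsMeasure P m) : m ∈ Jordan P :=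
  ⟨m, 0, hm, isMeasure_zero, (sub_zero m).symm⟩

theorem IsMeasure.mono {m : E → ℝ} (hm : IsMeasure P m) {x y : E} (h : P.le x y) :
    m x ≤ m y := by
  obtain ⟨c, hc⟩ := h
  linarith [hm.1 x c y hc, hm.2 c]

theorem IsSummableSum.sum_le {T : Type v} {a_ : T → E} {a : E} (h : IsSummableSum P a_ a)
    {m : E → ℝ} (hm : IsMeasure P m) (s : Finset T) : ∑ t ∈ s, m (a_ t) ≤ m a := by
  rcases s.eq_empty_or_nonempty with rfl | hs
  · simpa using hm.2 a
  obtain ⟨x, hx⟩ := h.1 s.toList (by simpa using hs.ne_empty) s.nodup_toList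
  calc ∑ t ∈ s, m (a_ t) = m x := by
        rw [hm.1.map_sumList hx, List.map_map, ← s.sum_map_toList]; rfl
    _ ≤ m a := hm.mono (h.2.1 x ⟨s.toList, s.nodup_toList, hx⟩)

theorem setOf_nodup_sum_eq_range {T : Type*} (f : T → ℝ) :
    {r : ℝ | ∃ l : List T, l.Nodup ∧ r = (l.map f).sum} =
      Set.range fun s : Finset T => ∑ t ∈ s, f t := by
  classical
  ext r
  constructor
  · rintro ⟨l, hl, rfl⟩
    exact ⟨l.toFinset, List.sum_toFinset f hl⟩
  · rintro ⟨s, rfl⟩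
    exact ⟨s.toList, s.nodup_toList, (s.sum_map_toList f).symm⟩

theorem completelyAdditive_iff_forall_lt {m : E → ℝ} (hm : IsMeasure P m) :
    CompletelyAdditive.{u, v} P m ↔ ∀ {T : Type v} (a_ : T → E) (a : E), IsSummableSum P a_ a →
      ∀ r < m a, ∃ s : Finset T, r < ∑ t ∈ s, m (a_ t) := by
  simp only [CompletelyAdditive, setOf_nodup_sum_eq_range]
  refine ⟨fun h T a_ a hsum r hr => ?_, fun h T a_ a hsum => ⟨?_, fun b hb => ?_⟩⟩
  · obtain ⟨_, ⟨s, rfl⟩, hs⟩ := (lt_isLUB_iff (h a_ a hsum)).1 hr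
    exact ⟨s, hs⟩
  · rintro _ ⟨s, rfl⟩
    exact hsum.sum_le hm s
  · by_contra! hlt
    obtain ⟨s, hs⟩ := h a_ a hsum b hlt
    exact (hb ⟨s, rfl⟩).not_gt hs

theorem CompletelyAdditive.zero : CompletelyAdditive.{u, v} P 0 :=
  (completelyAdditive_iff_forall_lt isMeasure_zero).2 fun _ _ _ r hr => ⟨∅, by simpa using hr⟩

theorem CompletelyAdditive.add {m k : E → ℝ} (hmc : CompletelyAdditive.{u, v} P m)
    (hkc : CompletelyAdditive.{u, v} P k) (hm : IsMeasure P m) (hk : IsMeasure P k) :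
    CompletelyAdditive.{u, v} P (m + k) := by
  classical
  rw [completelyAdditive_iff_forall_lt hm] at hmc
  rw [completelyAdditive_iff_forall_lt hk] at hkc
  rw [completelyAdditive_iff_forall_lt (hm.add hk)]
  intro T a_ a hsum r hr
  change r < m a + k a at hr
  obtain ⟨s₁, hs₁⟩ := hmc a_ a hsum (m a - (m a + k a - r) / 2) (by linarith)
  obtain ⟨s₂, hs₂⟩ := hkc a_ a hsum (k a - (m a + k a - r) / 2) (by linarith)
  have mono {f : E → ℝ} (hf : IsMeasure P f) {s : Finset T} (hs : s ⊆ s₁ ∪ s₂) :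
      ∑ t ∈ s, f (a_ t) ≤ ∑ t ∈ s₁ ∪ s₂, f (a_ t) :=
    Finset.sum_le_sum_of_subset_of_nonneg hs fun t _ _ => hf.2 (a_ t)
  refine ⟨s₁ ∪ s₂, ?_⟩
  simp only [Pi.add_apply, Finset.sum_add_distrib]
  linarith [mono hm (s := s₁) Finset.subset_union_left, mono hk (s := s₂) Finset.subset_union_right]

theorem CompletelyAdditive.sum {ι : Type*} {s : Finset ι} {m : ι → E → ℝ}
    (hm : ∀ i ∈ s, IsMeasure P (m i) ∧ CompletelyAdditive.{u, v} P (m i)) :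
    CompletelyAdditive.{u, v} P (∑ i ∈ s, m i) := by
  classical
  induction s using Finset.induction_on with
  | empty => rw [Finset.sum_empty]; exact CompletelyAdditive.zero
  | insert i s hi ih =>
    have hms : ∀ j ∈ s, IsMeasure P (m j) ∧ CompletelyAdditive.{u, v} P (m j) :=
      fun j hj => hm j (Finset.mem_insert_of_mem hj)
    obtain ⟨hmi, hmci⟩ := hm i (s.mem_insert_self i)
    rw [Finset.sum_insert hi]
    intro T
    exact hmci.add (ih hms) hmi (IsMeasure.sum fun j hj => (hms j hj).1)

theorem CompletelyAdditive.of_add {m k : E → ℝ} (h : CompletelyAdditive.{u, v} P (m + k))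
    (hm : IsMeasure P m) (hk : IsMeasure P k) : CompletelyAdditive.{u, v} P m := by
  rw [completelyAdditive_iff_forall_lt (hm.add hk)] at h
  rw [completelyAdditive_iff_forall_lt hm]
  intro T a_ a hsum r hr
  obtain ⟨s, hs⟩ := h a_ a hsum (r + k a) (by simp only [Pi.add_apply]; linarith)
  refine ⟨s, ?_⟩
  simp only [Pi.add_apply, Finset.sum_add_distrib] at hs
  linarith [hsum.sum_le hk s]

end PseudoEffectAlgebra

theorem stmt7_general {E : Type u} (P : PseudoEffectAlgebra E)
    (n : ℕ) (hn : 0 < n) (m_ : Fin n → (E → ℝ))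
    (hm : ∀ i, IsMeasure P (m_ i) ∧ CompletelyAdditive.{u, v} P (m_ i))
    (m : E → ℝ) (hsup : IsLubIn (Jordan P) (Set.range m_) m) :
    IsMeasure P m ∧ CompletelyAdditive.{u, v} P m := by
  obtain ⟨hmJ, hub, hlub⟩ := hsup
  have hμ : IsMeasure P (∑ i, m_ i) := IsMeasure.sum fun i _ => (hm i).1
  have hμc : CompletelyAdditive.{u, v} P (∑ i, m_ i) := CompletelyAdditive.sum fun i _ => hm i
  have hmeas : IsMeasure P m :=
    ⟨hmJ.isSignedMeasure, fun x => ((hm ⟨0, hn⟩).1.2 x).trans (hub _ ⟨_, rfl⟩ x)⟩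
  have hle : m ≤ ∑ i, m_ i := hlub _ hμ.mem_jordan <| by
    rintro _ ⟨i, rfl⟩
    exact Finset.single_le_sum (fun j _ x => (hm j).1.2 x) (Finset.mem_univ i)
  have hrest : IsMeasure P (∑ i, m_ i - m) := ⟨hμ.1.sub hmeas.1, fun x => sub_nonneg.2 (hle x)⟩
  exact ⟨hmeas, CompletelyAdditive.of_add (by rwa [add_sub_cancel]) hmeas hrest⟩

/-- The supremum (taken in `J(E)`) of finitely many completely additive
measures on an effect algebra with (RDP) is a completely additive measure. -/
theorem stmt7 {E : Type u} (P : PseudoEffectAlgebra E) (hcomm : P.Commutative)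
    (hRDP : P.RDP) (n : ℕ) (hn : 0 < n) (m_ : Fin n → (E → ℝ))
    (hm : ∀ i, IsMeasure P (m_ i) ∧ CompletelyAdditive.{u, v} P (m_ i))
    (m : E → ℝ) (hsup : IsLubIn (Jordan P) (Set.range m_) m) :
    IsMeasure P m ∧ CompletelyAdditive.{u, v} P m :=
  stmt7_general P n hn m_ hm m hsup
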